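/- The second Fréchet derivative of the Neohookean energy Ψ(F) = (μ/2)(F:F − d) − μ ln J + (λ/2)Θ(J)², J = det F, is the elastic modulus A(F) = μ(I ⊗̄ I + F^{−T} ⊗̲ F^{−1}) − λ J Θ(J) Θ'(J) F^{−T} ⊗̲ F^{−1} + λ [JΘ(J)(JΘ''(J) + Θ'(J)) + (JΘ'(J))²] F^{−T} ⊗ F^{−T}. -/

import Mathlib

noncomputable section
open Matrix

attribute [local instance] Matrix.normedAddCommGroup Matrix.normedSpace

/-- Frobenius inner product of two matrices. -/
def mdot {d : ℕ} (A B : Matrix (Fin d) (Fin d) ℝ) : ℝ := ∑ i, ∑ j, A i j * B i j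

/-- A fourth-order tensor on `ℝ^{d×d}`. -/
def Tensor4 (d : ℕ) := Fin d → Fin d → Fin d → Fin d → ℝ

/-- Action of a fourth-order tensor on a matrix: `(T:H)_{ij} = Σ_{kl} T_{ijkl} H_{kl}`. -/
def t4Act {d : ℕ} (T : Tensor4 d) (H : Matrix (Fin d) (Fin d) ℝ) :
    Matrix (Fin d) (Fin d) ℝ :=
  Matrix.of fun i j => ∑ k, ∑ l, T i j k l * H k l

/-- `(A ⊗ B)_{ijkl} = A_{ij} B_{kl}`. -/
def otimes {d : ℕ} (A B : Matrix (Fin d) (Fin d) ℝ) : Tensor4 d :=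
  fun i j k l => A i j * B k l

/-- `(A ⊗̲ B)_{ijkl} = A_{il} B_{jk}`. -/
def uotimes {d : ℕ} (A B : Matrix (Fin d) (Fin d) ℝ) : Tensor4 d :=
  fun i j k l => A i l * B j k

/-- `(A ⊗̄ B)_{ijkl} = A_{ik} B_{jl}`. -/
def botimes {d : ℕ} (A B : Matrix (Fin d) (Fin d) ℝ) : Tensor4 d :=
  fun i j k l => A i k * B j l

/-- The elastic modulus of the Neohookean material:
`A(F) = μ(I ⊗̄ I + F^{−T} ⊗̲ F^{−1}) − λ J Θ(J) Θ'(J) F^{−T} ⊗̲ F^{−1}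
       + λ [JΘ(J)(JΘ''(J) + Θ'(J)) + (JΘ'(J))²] F^{−T} ⊗ F^{−T}`, `J = det F`. -/
def elasticModulus {d : ℕ} (μ lam : ℝ) (Θ Θ' Θ'' : ℝ → ℝ)
    (F : Matrix (Fin d) (Fin d) ℝ) : Tensor4 d :=
  fun i j k l =>
    let J := F.det
    μ * (botimes (1 : Matrix (Fin d) (Fin d) ℝ) 1 i j k l
          + uotimes (F⁻¹)ᵀ F⁻¹ i j k l)
    - lam * J * Θ J * Θ' J * uotimes (F⁻¹)ᵀ F⁻¹ i j k l
    + lam * (J * Θ J * (J * Θ'' J + Θ' J) + (J * Θ' J) ^ 2)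
        * otimes (F⁻¹)ᵀ (F⁻¹)ᵀ i j k l

/-!
With `J = det G`, Jacobi's formula `DJ(G)[K] = tr(adj G · K) = J tr(G⁻¹K)` (the determinant is
multilinear in the rows) and `D(G⁻¹)[K] = -G⁻¹KG⁻¹` give, on the open set `J > 0`,
`DΨ(G)[H] = μ G:H + (λJΘ(J)Θ'(J) - μ) tr(G⁻¹H)`.
Differentiating once more at `F`,
`D²Ψ(F)[H,K] = μ H:K + λ(ΘΘ' + JΘ'² + JΘΘ'') J tr(F⁻¹H) tr(F⁻¹K) - (λJΘΘ' - μ) tr(F⁻¹HF⁻¹K)`,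
and `I ⊗̄ I`, `F⁻ᵀ ⊗̲ F⁻¹`, `F⁻ᵀ ⊗ F⁻ᵀ` pair with `H`, `K` to `H:K`, `tr(F⁻¹HF⁻¹K)` and
`tr(F⁻¹H) tr(F⁻¹K)`.
-/

open Topology

namespace Matrix

variable {n : Type*} [Fintype n] [DecidableEq n]

theorem det_updateRow_eq_sum_mul_adjugate {R : Type*} [CommRing R] (G : Matrix n n R) (i : n)
    (v : n → R) :
    (G.updateRow i v).det = ∑ k, v k * G.adjugate k i := by
  rw [← cramer_transpose_apply, cramer_eq_adjugate_mulVec, ← adjugate_transpose, mulVec,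
    dotProduct]
  simp only [transpose_apply, mul_comm]

theorem sum_det_updateRow_eq_trace_adjugate_mul {R : Type*} [CommRing R] (G K : Matrix n n R) :
    ∑ i, (G.updateRow i (K i)).det = trace (G.adjugate * K) := by
  simp only [det_updateRow_eq_sum_mul_adjugate, trace, diag, mul_apply]
  rw [Finset.sum_comm]
  simp only [mul_comm]

theorem trace_adjugate_mul {K : Type*} [Field K] {G : Matrix n n K} (hG : G.det ≠ 0)
    (A : Matrix n n K) :
    trace (G.adjugate * A) = G.det * trace (G⁻¹ * A) := by
  rw [inv_def, Ring.inverse_eq_inv', smul_mul, trace_smul, smul_eq_mul, mul_inv_cancel_left₀ hG]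

variable {𝕜 : Type*} [NontriviallyNormedField 𝕜]

def detContinuousMultilinear : ContinuousMultilinearMap 𝕜 (fun _ : n => n → 𝕜) 𝕜 :=
  { (detRowAlternating : (n → 𝕜) [⋀^n]→ₗ[𝕜] 𝕜).toMultilinearMap with
    cont := continuous_id.matrix_det }

section CompleteSpace

variable [CompleteSpace 𝕜]

variable (n) in
def traceMulLeftCLM (A : Matrix n n 𝕜) : Matrix n n 𝕜 →L[𝕜] 𝕜 :=
  (traceLinearMap n 𝕜 𝕜 ∘ₗ LinearMap.mulLeft 𝕜 A).toContinuousLinearMap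

@[simp]
theorem traceMulLeftCLM_apply (A K : Matrix n n 𝕜) :
    traceMulLeftCLM n A K = trace (A * K) := rfl

theorem hasFDerivAt_det (G : Matrix n n 𝕜) :
    HasFDerivAt det (traceMulLeftCLM n G.adjugate) G := by
  refine (detContinuousMultilinear.hasFDerivAt G).congr_fderiv
    (ContinuousLinearMap.ext fun K => ?_)
  exact (detContinuousMultilinear.linearDeriv_apply G K).trans
    (sum_det_updateRow_eq_trace_adjugate_mul G K)

-- The sup norm on matrices is not submultiplicative, so the derivative of inversion is
-- transported from the Banach algebra of continuous endomorphisms of `n → 𝕜`.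
variable (n 𝕜) in
def toContinuousLinearMapEquiv : Matrix n n 𝕜 ≃L[𝕜] ((n → 𝕜) →L[𝕜] (n → 𝕜)) :=
  (toLin'.trans LinearMap.toContinuousLinearMap).toContinuousLinearEquiv

theorem toContinuousLinearMapEquiv_mul (A B : Matrix n n 𝕜) :
    toContinuousLinearMapEquiv n 𝕜 (A * B)
      = toContinuousLinearMapEquiv n 𝕜 A * toContinuousLinearMapEquiv n 𝕜 B := by
  ext1 v
  simp [toContinuousLinearMapEquiv]

theorem toContinuousLinearMapEquiv_one : toContinuousLinearMapEquiv n 𝕜 1 = 1 := by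
  ext1 v
  simp [toContinuousLinearMapEquiv]

def unitOfIsUnitDet {G : Matrix n n 𝕜} (hG : IsUnit G.det) :
    ((n → 𝕜) →L[𝕜] (n → 𝕜))ˣ where
  val := toContinuousLinearMapEquiv n 𝕜 G
  inv := toContinuousLinearMapEquiv n 𝕜 G⁻¹
  val_inv := by
    rw [← toContinuousLinearMapEquiv_mul, mul_nonsing_inv G hG, toContinuousLinearMapEquiv_one]
  inv_val := by
    rw [← toContinuousLinearMapEquiv_mul, nonsing_inv_mul G hG, toContinuousLinearMapEquiv_one]

theorem nonsing_inv_eq_symm_ringInverse {G : Matrix n n 𝕜} (hG : IsUnit G.det) :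
    G⁻¹ = (toContinuousLinearMapEquiv n 𝕜).symm
      (Ring.inverse (toContinuousLinearMapEquiv n 𝕜 G)) := by
  rw [show toContinuousLinearMapEquiv n 𝕜 G = unitOfIsUnitDet hG from rfl, Ring.inverse_unit]
  exact ((toContinuousLinearMapEquiv n 𝕜).symm_apply_apply _).symm

theorem hasFDerivAt_nonsing_inv {G : Matrix n n 𝕜} (hG : IsUnit G.det) :
    HasFDerivAt (fun A : Matrix n n 𝕜 => A⁻¹)
      (-(LinearMap.mulLeftRight 𝕜 (G⁻¹, G⁻¹)).toContinuousLinearMap) G := by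
  set e := toContinuousLinearMapEquiv n 𝕜
  have hunits : ∀ᶠ A in nhds G, IsUnit A.det := by
    simpa only [isUnit_iff_ne_zero] using
      (hasFDerivAt_det G).continuousAt.eventually_ne (isUnit_iff_ne_zero.mp hG)
  have h := (e.symm.hasFDerivAt.comp G
    ((hasFDerivAt_ringInverse (unitOfIsUnitDet hG)).comp G e.hasFDerivAt)).congr_of_eventuallyEq
    (hunits.mono fun A hA => nonsing_inv_eq_symm_ringInverse hA)
  refine h.congr_fderiv (ContinuousLinearMap.ext fun K => ?_)
  -- Derivatives built by the chain rule live on the normed-space instances of `Matrix`, which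
  -- `simp` does not match against the default ones, so they are evaluated by `change`.
  change e.symm (-(e G⁻¹ * e K * e G⁻¹)) = -(G⁻¹ * K * G⁻¹)
  rw [← toContinuousLinearMapEquiv_mul, ← toContinuousLinearMapEquiv_mul, ← map_neg,
    e.symm_apply_apply]

theorem hasFDerivAt_trace_nonsing_inv_mul {G : Matrix n n 𝕜} (hG : IsUnit G.det)
    (H : Matrix n n 𝕜) :
    HasFDerivAt (fun A : Matrix n n 𝕜 => trace (A⁻¹ * H))
      (-traceMulLeftCLM n (G⁻¹ * H * G⁻¹)) G := by
  have h := (traceMulLeftCLM n H).hasFDerivAt.comp G (hasFDerivAt_nonsing_inv hG)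
  simp only [Function.comp_def, traceMulLeftCLM_apply, ← trace_mul_comm _ H] at h
  refine h.congr_fderiv (ContinuousLinearMap.ext fun K => ?_)
  change trace (H * -(G⁻¹ * K * G⁻¹)) = -trace (G⁻¹ * H * G⁻¹ * K)
  rw [mul_neg, trace_neg, trace_mul_cycle']
  simp only [mul_assoc]

end CompleteSpace

end Matrix

section Frobenius

variable {d : ℕ}

theorem mdot_comm (A B : Matrix (Fin d) (Fin d) ℝ) : mdot A B = mdot B A := by
  simp only [mdot, mul_comm]

theorem mdot_eq_trace_transpose_mul (A B : Matrix (Fin d) (Fin d) ℝ) :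
    mdot A B = trace (Aᵀ * B) := by
  simp only [mdot, trace, diag, mul_apply, transpose_apply]
  exact Finset.sum_comm

theorem hasFDerivAt_mdot_left (G H : Matrix (Fin d) (Fin d) ℝ) :
    HasFDerivAt (fun A => mdot A H) (traceMulLeftCLM (Fin d) Hᵀ) G := by
  convert (traceMulLeftCLM (Fin d) Hᵀ).hasFDerivAt using 1
  funext A
  rw [traceMulLeftCLM_apply, mdot_comm, mdot_eq_trace_transpose_mul]

theorem hasFDerivAt_mdot_self (G : Matrix (Fin d) (Fin d) ℝ) :
    HasFDerivAt (fun A => mdot A A) ((2 : ℝ) • traceMulLeftCLM (Fin d) Gᵀ) G := by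
  let e (i j : Fin d) :=
    (entryLinearMap ℝ ℝ i j : Matrix (Fin d) (Fin d) ℝ →ₗ[ℝ] ℝ).toContinuousLinearMap
  have h := HasFDerivAt.fun_sum (u := Finset.univ) fun i _ =>
    HasFDerivAt.fun_sum (u := Finset.univ) fun j _ =>
      (e i j).hasFDerivAt.mul (x := G) (e i j).hasFDerivAt
  refine h.congr_fderiv (ContinuousLinearMap.ext fun K => ?_)
  simp only [_root_.sum_apply, _root_.add_apply]
  change ∑ i, ∑ j, (G i j * K i j + G i j * K i j) = 2 * trace (Gᵀ * K)
  simp only [← mdot_eq_trace_transpose_mul, mdot, ← two_mul, Finset.mul_sum]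

end Frobenius

section TensorPairing

variable {d : ℕ} (A B H K : Matrix (Fin d) (Fin d) ℝ)

theorem mdot_t4Act (T : Tensor4 d) :
    mdot (t4Act T H) K = ∑ i, ∑ j, ∑ k, ∑ l, T i j k l * H k l * K i j := by
  simp only [mdot, t4Act, of_apply, Finset.sum_mul]

theorem mdot_t4Act_linearCombination (a b c : ℝ) (S T U : Tensor4 d) :
    mdot (t4Act (fun i j k l => a * S i j k l + b * T i j k l + c * U i j k l) H) K
      = a * mdot (t4Act S H) K + b * mdot (t4Act T H) K + c * mdot (t4Act U H) K := by
  refine (mdot_t4Act H K _).trans ?_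
  rw [mdot_t4Act, mdot_t4Act, mdot_t4Act]
  simp only [add_mul, Finset.sum_add_distrib, Finset.mul_sum, mul_assoc]

theorem mdot_t4Act_botimes_one : mdot (t4Act (botimes 1 1) H) K = mdot H K := by
  rw [mdot_t4Act]
  simp [botimes, one_apply, mdot]

theorem mdot_t4Act_uotimes : mdot (t4Act (uotimes Aᵀ B) H) K = trace (B * H * A * K) := by
  rw [mdot_t4Act]
  simp only [uotimes, transpose_apply, trace, diag, mul_apply, Finset.sum_mul]
  rw [Finset.sum_comm]
  refine Finset.sum_congr rfl fun j _ => Finset.sum_congr rfl fun i _ => ?_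
  rw [Finset.sum_comm]
  exact Finset.sum_congr rfl fun l _ => Finset.sum_congr rfl fun k _ => by ring

theorem mdot_t4Act_otimes : mdot (t4Act (otimes A B) H) K = mdot B H * mdot A K := by
  rw [mdot_t4Act]
  simp only [otimes, mdot, Finset.sum_mul, Finset.mul_sum]
  exact Finset.sum_congr rfl fun i _ => Finset.sum_congr rfl fun j _ =>
    Finset.sum_congr rfl fun k _ => Finset.sum_congr rfl fun l _ => by ring

end TensorPairing

theorem mdot_t4Act_elasticModulus {d : ℕ} (μ lam : ℝ) (Θ Θ' Θ'' : ℝ → ℝ)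
    (F H K : Matrix (Fin d) (Fin d) ℝ) :
    mdot (t4Act (elasticModulus μ lam Θ Θ' Θ'' F) H) K
      = μ * mdot H K + (μ - lam * F.det * Θ F.det * Θ' F.det) * trace (F⁻¹ * H * F⁻¹ * K)
        + lam * (F.det * Θ F.det * (F.det * Θ'' F.det + Θ' F.det) + (F.det * Θ' F.det) ^ 2)
          * (trace (F⁻¹ * H) * trace (F⁻¹ * K)) := by
  have hsplit : elasticModulus μ lam Θ Θ' Θ'' F = fun i j k l =>
      μ * botimes 1 1 i j k l
      + (μ - lam * F.det * Θ F.det * Θ' F.det) * uotimes (F⁻¹)ᵀ F⁻¹ i j k l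
      + lam * (F.det * Θ F.det * (F.det * Θ'' F.det + Θ' F.det) + (F.det * Θ' F.det) ^ 2)
        * otimes (F⁻¹)ᵀ (F⁻¹)ᵀ i j k l := by
    funext i j k l
    simp only [elasticModulus]
    ring
  rw [hsplit, mdot_t4Act_linearCombination, mdot_t4Act_botimes_one, mdot_t4Act_uotimes,
    mdot_t4Act_otimes, mdot_eq_trace_transpose_mul (F⁻¹)ᵀ, mdot_eq_trace_transpose_mul (F⁻¹)ᵀ,
    transpose_transpose]

section Neohookean

variable {d : ℕ} {μ lam : ℝ} {Θ : ℝ → ℝ}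

def neohookeanEnergy (μ lam : ℝ) (Θ : ℝ → ℝ) (F : Matrix (Fin d) (Fin d) ℝ) : ℝ :=
  μ / 2 * (mdot F F - d) - μ * Real.log F.det + lam / 2 * (Θ F.det) ^ 2

theorem fderiv_neohookeanEnergy_apply {G : Matrix (Fin d) (Fin d) ℝ} {θ' : ℝ}
    (hΘ : HasDerivAt Θ θ' G.det) (hG : G.det ≠ 0) (H : Matrix (Fin d) (Fin d) ℝ) :
    fderiv ℝ (neohookeanEnergy μ lam Θ) G H
      = μ * mdot G H + (lam * G.det * Θ G.det * θ' - μ) * trace (G⁻¹ * H) := by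
  have hJ := hasFDerivAt_det G
  have h : HasFDerivAt (neohookeanEnergy μ lam Θ) _ G :=
    ((((hasFDerivAt_mdot_self G).sub_const (d : ℝ)).const_mul (μ / 2)).sub
      (((Real.hasDerivAt_log hG).comp_hasFDerivAt G hJ).const_mul μ)).add
      (((hΘ.pow 2).comp_hasFDerivAt G hJ).const_mul (lam / 2))
  rw [h.fderiv]
  change μ / 2 * (2 * trace (Gᵀ * H)) - μ * (G.det⁻¹ * trace (G.adjugate * H))
    + lam / 2 * (2 * Θ G.det ^ 1 * θ' * trace (G.adjugate * H)) = _
  rw [trace_adjugate_mul hG, mdot_eq_trace_transpose_mul]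
  field_simp
  ring

theorem fderiv_mdot_add_mul_trace_nonsing_inv_mul_apply {g : ℝ → ℝ} {g' : ℝ}
    {F : Matrix (Fin d) (Fin d) ℝ} (hg : HasDerivAt g g' F.det) (hF : F.det ≠ 0)
    (H K : Matrix (Fin d) (Fin d) ℝ) :
    fderiv ℝ (fun G => μ * mdot G H + g G.det * trace (G⁻¹ * H)) F K
      = μ * mdot K H + g' * F.det * trace (F⁻¹ * K) * trace (F⁻¹ * H)
        - g F.det * trace (F⁻¹ * H * F⁻¹ * K) := by
  have h : HasFDerivAt (fun G => μ * mdot G H + g G.det * trace (G⁻¹ * H)) _ F :=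
    ((hasFDerivAt_mdot_left F H).const_mul μ).add
      ((hg.comp_hasFDerivAt F (hasFDerivAt_det F)).mul
        (hasFDerivAt_trace_nonsing_inv_mul (isUnit_iff_ne_zero.mpr hF) H))
  rw [h.fderiv]
  change μ * trace (Hᵀ * K) + (g F.det * -trace (F⁻¹ * H * F⁻¹ * K)
    + trace (F⁻¹ * H) * (g' * trace (F.adjugate * K))) = _
  rw [trace_adjugate_mul hF, mdot_comm, mdot_eq_trace_transpose_mul]
  ring

end Neohookean

theorem neohookean_elastic_modulus_general
    (d : ℕ) (μ lam : ℝ)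
    (Θ Θ' Θ'' : ℝ → ℝ)
    (hΘ : ∀ x : ℝ, 0 < x → HasDerivAt Θ (Θ' x) x)
    (hΘ' : ∀ x : ℝ, 0 < x → HasDerivAt Θ' (Θ'' x) x)
    (Ψ : Matrix (Fin d) (Fin d) ℝ → ℝ)
    (hΨ : ∀ F : Matrix (Fin d) (Fin d) ℝ,
      Ψ F = μ / 2 * (mdot F F - d) - μ * Real.log F.det + lam / 2 * (Θ F.det) ^ 2)
    (F : Matrix (Fin d) (Fin d) ℝ) (hF : 0 < F.det) :
    ∀ H K : Matrix (Fin d) (Fin d) ℝ,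
      fderiv ℝ (fun G => fderiv ℝ Ψ G H) F K
        = mdot (t4Act (elasticModulus μ lam Θ Θ' Θ'' F) H) K := by
  intro H K
  obtain rfl : Ψ = neohookeanEnergy μ lam Θ := funext hΨ
  set g : ℝ → ℝ := fun x => lam * x * Θ x * Θ' x - μ
  have hfirst : (fun G => fderiv ℝ (neohookeanEnergy μ lam Θ) G H)
      =ᶠ[𝓝 F] fun G => μ * mdot G H + g G.det * trace (G⁻¹ * H) := by
    filter_upwards [(hasFDerivAt_det F).continuousAt.eventually (lt_mem_nhds hF)] with G hG
    exact fderiv_neohookeanEnergy_apply (hΘ _ hG) hG.ne' H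
  have hg : HasDerivAt g (lam * (Θ F.det * Θ' F.det + F.det * Θ' F.det * Θ' F.det
      + F.det * Θ F.det * Θ'' F.det)) F.det := by
    have h :=
      ((((hasDerivAt_id F.det).const_mul lam).mul (hΘ _ hF)).mul (hΘ' _ hF)).sub_const μ
    exact h.congr_deriv (by simp only [id, mul_one, Pi.mul_apply]; ring)
  rw [hfirst.fderiv_eq, fderiv_mdot_add_mul_trace_nonsing_inv_mul_apply hg hF.ne',
    mdot_t4Act_elasticModulus, mdot_comm K]
  ring

/-- the second Fréchet derivative of the Neohookean energy
`Ψ(F) = (μ/2)(F:F − d) − μ ln J + (λ/2)Θ(J)²`, `J = det F`, at a matrix `F` with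
positive determinant, is represented via the Frobenius pairing by the elastic
modulus `A(F)`: `D²Ψ(F)[H,K] = (A(F):H) : K` for all `H, K`. -/
theorem neohookean_elastic_modulus
    (d : ℕ) (hd : d = 2 ∨ d = 3) (μ lam : ℝ)
    (Θ Θ' Θ'' : ℝ → ℝ)
    (hΘ : ∀ x : ℝ, 0 < x → HasDerivAt Θ (Θ' x) x)
    (hΘ' : ∀ x : ℝ, 0 < x → HasDerivAt Θ' (Θ'' x) x)
    (hΘcont : ContinuousOn Θ'' (Set.Ioi 0))
    (Ψ : Matrix (Fin d) (Fin d) ℝ → ℝ)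
    (hΨ : ∀ F : Matrix (Fin d) (Fin d) ℝ,
      Ψ F = μ / 2 * (mdot F F - d) - μ * Real.log F.det + lam / 2 * (Θ F.det) ^ 2)
    (F : Matrix (Fin d) (Fin d) ℝ) (hF : 0 < F.det) :
    ∀ H K : Matrix (Fin d) (Fin d) ℝ,
      fderiv ℝ (fun G => fderiv ℝ Ψ G H) F K
        = mdot (t4Act (elasticModulus μ lam Θ Θ' Θ'' F) H) K :=
  neohookean_elastic_modulus_general d μ lam Θ Θ' Θ'' hΘ hΘ' Ψ hΨ F hF
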